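/- Let K be an uncountable Polish space. Then there exists f in the uniform closure of DBSC(K) in B(K) such that for every g ∈ DBSC(K) the set {x : f(x) ≠ g(x)} is uncountable. In particular, DBSC(K) is not closed in (B(K), ||·||_∞) in a strong sense: no function in DBSC(K) agrees with f off a countable set. -/

import Mathlib

/-- f is a bounded real function (member of B(K)). -/
def Bdd {K : Type*} (f : K → ℝ) : Prop := ∃ C : ℝ, ∀ x, |f x| ≤ C

/-- g is a difference of bounded semicontinuous functions. -/
def DBSC {K : Type*} [TopologicalSpace K] (g : K → ℝ) : Prop :=
  ∃ h k : K → ℝ, Bdd h ∧ Bdd k ∧ LowerSemicontinuous h ∧ LowerSemicontinuous k ∧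
    g = h - k

/-!
Fix a continuous injection `e` of the Cantor cube `ℕ → ℕ → Bool` into `K`. The witness is
`f = ∑ 2⁻ⁿ fₙ`, where `fₙ (e y) = 1` exactly when the column `y n` has an odd number of ones
below `2 · 4ⁿ`, and `fₙ = 0` off the range of `e`. Each `fₙ` is an alternating sum of indicators
of the closed sets "at most `i` ones in column `n`", so the partial sums of `f` are DBSC.

Suppose `g = h - k` (with `h`, `k` bounded and lower semicontinuous) agrees with `f` off a
countable set. For uncountably many choices `b` of the other columns the points `e y` with
column `n` a finite set `F` and all other columns `b` are pairwise distinct, so for one `b`,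
`g = f` at all of them. Adding a large point `m` to `F` moves `e y` only slightly but changes
`g` by `2⁻ⁿ`, and lower semicontinuity then forces `h + k` to grow by `2⁻ⁿ⁻¹`. After `4ⁿ` such
steps `h + k` has grown by `2ⁿ⁻¹`, impossible once `2ⁿ > 4 (sup |h| + sup |k|)`.
-/

open Set Filter Topology Function

section DBSC

variable {K : Type*}

lemma Bdd.zero : Bdd (0 : K → ℝ) := ⟨0, by simp⟩

lemma Bdd.add {f g : K → ℝ} (hf : Bdd f) (hg : Bdd g) : Bdd (f + g) := by
  obtain ⟨C, hC⟩ := hf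
  obtain ⟨D, hD⟩ := hg
  exact ⟨C + D, fun x => (abs_add_le _ _).trans (add_le_add (hC x) (hD x))⟩

lemma Bdd.div_const {f : K → ℝ} (hf : Bdd f) {c : ℝ} (hc : 0 ≤ c) : Bdd (fun x => f x / c) := by
  obtain ⟨C, hC⟩ := hf
  exact ⟨C / c, fun x => by
    rw [abs_div, abs_of_nonneg hc]; exact div_le_div_of_nonneg_right (hC x) hc⟩

variable [TopologicalSpace K]

lemma DBSC.add {f g : K → ℝ} (hf : DBSC f) (hg : DBSC g) : DBSC (f + g) := by
  obtain ⟨h₁, k₁, hh₁, hk₁, lh₁, lk₁, rfl⟩ := hf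
  obtain ⟨h₂, k₂, hh₂, hk₂, lh₂, lk₂, rfl⟩ := hg
  exact ⟨h₁ + h₂, k₁ + k₂, hh₁.add hh₂, hk₁.add hk₂, lh₁.add lh₂, lk₁.add lk₂, by abel⟩

lemma DBSC.neg {f : K → ℝ} (hf : DBSC f) : DBSC (-f) := by
  obtain ⟨h, k, hh, hk, lh, lk, rfl⟩ := hf
  exact ⟨k, h, hk, hh, lk, lh, neg_sub h k⟩

lemma DBSC.sub {f g : K → ℝ} (hf : DBSC f) (hg : DBSC g) : DBSC (f - g) :=
  sub_eq_add_neg f g ▸ hf.add hg.neg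

variable (K) in
def dbscAddSubgroup : AddSubgroup (K → ℝ) where
  carrier := {g | DBSC g}
  zero_mem' := ⟨0, 0, .zero, .zero, lowerSemicontinuous_const, lowerSemicontinuous_const,
    (sub_zero 0).symm⟩
  add_mem' := DBSC.add
  neg_mem' := DBSC.neg

lemma DBSC.sum {ι : Type*} (s : Finset ι) {f : ι → K → ℝ} (hf : ∀ i ∈ s, DBSC (f i)) :
    DBSC fun x => ∑ i ∈ s, f i x := by
  have hmem := (dbscAddSubgroup K).sum_mem hf
  rwa [Finset.sum_fn] at hmem

lemma DBSC.div_const {f : K → ℝ} (hf : DBSC f) {c : ℝ} (hc : 0 ≤ c) :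
    DBSC (fun x => f x / c) := by
  obtain ⟨h, k, hh, hk, lh, lk, rfl⟩ := hf
  have hcont : Continuous fun t : ℝ => t / c := continuous_id.div_const c
  have hmono : Monotone fun t : ℝ => t / c := fun _ _ hab => div_le_div_of_nonneg_right hab hc
  exact ⟨_, _, hh.div_const hc, hk.div_const hc, hcont.comp_lowerSemicontinuous lh hmono,
    hcont.comp_lowerSemicontinuous lk hmono, funext fun x => sub_div (h x) (k x) c⟩

lemma IsClosed.dbsc_indicator_one {A : Set K} (hA : IsClosed A) : DBSC (A.indicator 1) := by
  refine ⟨0, A.indicator fun _ => -1, .zero, ⟨1, fun x => ?_⟩, lowerSemicontinuous_const,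
    hA.lowerSemicontinuous_indicator (by norm_num), ?_⟩
  · by_cases hx : x ∈ A <;> simp [hx]
  · ext x
    by_cases hx : x ∈ A <;> simp [hx]

end DBSC

section DivTwoPow

variable {a : ℕ → ℝ} (ha : ∀ n, |a n| ≤ 1)
include ha

-- The bound has the shape `C / 2 / 2 ^ n` expected by `dist_le_of_le_geometric_two_of_tendsto`.
lemma abs_div_two_pow_le (n : ℕ) : |a n / 2 ^ n| ≤ 2 / 2 / 2 ^ n := by
  rw [abs_div, abs_of_pos (by positivity : (0 : ℝ) < 2 ^ n), div_self two_ne_zero]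
  exact div_le_div_of_nonneg_right (ha n) (by positivity)

lemma summable_div_two_pow : Summable fun n => a n / 2 ^ n :=
  .of_norm_bounded (summable_geometric_two' 2) (abs_div_two_pow_le ha)

lemma abs_tsum_div_two_pow_sub_sum_le (m : ℕ) :
    |∑' n, a n / 2 ^ n - ∑ n ∈ Finset.range m, a n / 2 ^ n| ≤ 2 / 2 ^ m := by
  rw [abs_sub_comm]
  refine dist_le_of_le_geometric_two_of_tendsto (fun n => ?_)
    (summable_div_two_pow ha).hasSum.tendsto_sum_nat m
  rw [Real.dist_eq, Finset.sum_range_succ, abs_sub_comm, add_sub_cancel_left]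
  exact abs_div_two_pow_le ha n

end DivTwoPow

lemma bdd_tsum_div_two_pow {K : Type*} {u : ℕ → K → ℝ} (hu : ∀ n x, |u n x| ≤ 1) :
    Bdd fun x => ∑' n, u n x / 2 ^ n :=
  ⟨2, fun x => by simpa using abs_tsum_div_two_pow_sub_sum_le (hu · x) 0⟩

lemma exists_dbsc_near_tsum_div_two_pow {K : Type*} [TopologicalSpace K] {u : ℕ → K → ℝ}
    (hu : ∀ n, DBSC (u n)) (hu₁ : ∀ n x, |u n x| ≤ 1) {ε : ℝ} (hε : 0 < ε) :
    ∃ g : K → ℝ, DBSC g ∧ ∀ x, |∑' n, u n x / 2 ^ n - g x| ≤ ε := by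
  obtain ⟨m, hm⟩ := exists_pow_lt_of_lt_one (half_pos hε) (by norm_num : (1 / 2 : ℝ) < 1)
  refine ⟨fun x => ∑ n ∈ Finset.range m, u n x / 2 ^ n, ?_, fun x => ?_⟩
  · exact DBSC.sum _ fun n _ => (hu n).div_const (by positivity)
  · refine (abs_tsum_div_two_pow_sub_sum_le (hu₁ · x) m).trans ?_
    rw [div_eq_mul_one_div 2, ← one_div_pow]
    linarith

section AltIndicatorSum

variable {α : Type*}

noncomputable def altIndicatorSum (A : ℕ → Set α) (M : ℕ) (x : α) : ℝ :=
  ∑ i ∈ Finset.range M, ((A (2 * i + 1)).indicator 1 x - (A (2 * i)).indicator 1 x)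

lemma abs_altIndicatorSum_le_one {A : ℕ → Set α} (hA : Monotone A) (M : ℕ) (x : α) :
    |altIndicatorSum A M x| ≤ 1 := by
  have hmono : ∀ {i j}, i ≤ j → (A i).indicator (1 : α → ℝ) x ≤ (A j).indicator 1 x :=
    fun hij => indicator_le_indicator_of_subset (hA hij) zero_le_one x
  have hnonneg : 0 ≤ altIndicatorSum A M x :=
    Finset.sum_nonneg fun i _ => sub_nonneg.2 (hmono (by omega))
  rw [abs_of_nonneg hnonneg]
  calc altIndicatorSum A M x
      ≤ ∑ i ∈ Finset.range M, ((A (2 * (i + 1))).indicator 1 x - (A (2 * i)).indicator 1 x) :=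
        Finset.sum_le_sum fun i _ => sub_le_sub_right (hmono (by omega)) _
    _ = (A (2 * M)).indicator 1 x - (A 0).indicator 1 x :=
        Finset.sum_range_sub (fun i => (A (2 * i)).indicator (1 : α → ℝ) x) M
    _ ≤ 1 - 0 := sub_le_sub (indicator_le_self' (fun _ _ => zero_le_one) x)
        (indicator_nonneg (fun _ _ => zero_le_one) x)
    _ = 1 := sub_zero 1

lemma altIndicatorSum_eq_of_mem_iff {A : ℕ → Set α} {M c : ℕ} {x : α}
    (hx : ∀ j, x ∈ A j ↔ c ≤ j) :
    altIndicatorSum A M x = if Odd c ∧ c < 2 * M then 1 else 0 := by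
  have hterm : ∀ i, (A (2 * i + 1)).indicator (1 : α → ℝ) x - (A (2 * i)).indicator 1 x
      = if c % 2 = 1 ∧ c / 2 = i then 1 else 0 := fun i => by
    by_cases h₁ : c ≤ 2 * i + 1 <;> by_cases h₂ : c ≤ 2 * i <;>
      simp [hx, h₁, h₂] <;> omega
  simp only [altIndicatorSum, hterm, Nat.odd_iff]
  by_cases hodd : c % 2 = 1
  · simp only [hodd, true_and, Finset.sum_ite_eq, Finset.mem_range]
    congr 1
    exact propext (by omega)
  · simp [hodd]

lemma abs_altIndicatorSum_sub_eq_one {A : ℕ → Set α} {M c : ℕ} {x x' : α}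
    (hx : ∀ j, x ∈ A j ↔ c ≤ j) (hx' : ∀ j, x' ∈ A j ↔ c + 1 ≤ j) (hc : c + 1 < 2 * M) :
    |altIndicatorSum A M x' - altIndicatorSum A M x| = 1 := by
  rw [altIndicatorSum_eq_of_mem_iff hx, altIndicatorSum_eq_of_mem_iff hx']
  rcases Nat.even_or_odd c with h | h
  · simp [h.add_one, Nat.not_odd_iff_even.2 h, hc]
  · simp [Nat.not_odd_iff_even.2 h.add_one, h, (by omega : c < 2 * M)]

lemma altIndicatorSum_image {β : Type*} {e : α → β} (he : Injective e) (A : ℕ → Set α)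
    (M : ℕ) (x : α) : altIndicatorSum (fun i => e '' A i) M (e x) = altIndicatorSum A M x := by
  simp only [altIndicatorSum, indicator_image he]
  rfl

variable [TopologicalSpace α]

lemma dbsc_altIndicatorSum {A : ℕ → Set α} (hA : ∀ i, IsClosed (A i)) (M : ℕ) :
    DBSC (altIndicatorSum A M) :=
  DBSC.sum _ fun i _ => (hA (2 * i + 1)).dbsc_indicator_one.sub (hA (2 * i)).dbsc_indicator_one

end AltIndicatorSum

lemma Set.Countable.exists_disjoint {α ι : Type*} [Uncountable ι] {s : Set α} (hs : s.Countable)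
    {P : ι → Set α} (hP : Pairwise (Disjoint on P)) : ∃ i, Disjoint (P i) s := by
  have hmeet := countable_ofPred_nonempty_of_disjoint (f := fun i => P i ∩ s)
    (fun i j hij => (hP hij).mono inter_subset_left inter_subset_left)
    (fun _ => inter_subset_right) hs
  by_contra! h
  exact not_countable_univ (hmeet.mono fun i _ => not_disjoint_iff_nonempty_inter.1 (h i))

section Semicontinuity

variable {K : Type*} [TopologicalSpace K] {h k : K → ℝ}

lemma eventually_add_le_of_abs_sub_ge {ι : Type*} {l : Filter ι} {p : K} {z : ι → K}
    (hh : LowerSemicontinuousAt h p) (hk : LowerSemicontinuousAt k p) (hz : Tendsto z l (𝓝 p))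
    {δ : ℝ} (hδ : 0 < δ) (hjump : ∀ᶠ i in l, δ ≤ |(h - k) (z i) - (h - k) p|) :
    ∀ᶠ i in l, (h + k) p + δ / 2 ≤ (h + k) (z i) := by
  filter_upwards [hz.eventually (hh _ (by linarith : h p - δ / 4 < h p)),
    hz.eventually (hk _ (by linarith : k p - δ / 4 < k p)), hjump] with i hhi hki hi
  simp only [Pi.add_apply, Pi.sub_apply] at hhi hki hi ⊢
  rcases le_abs'.1 hi with hi | hi <;> linarith

lemma exists_card_eq_and_add_le (hh : LowerSemicontinuous h) (hk : LowerSemicontinuous k)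
    {x : Finset ℕ → K} (hx : ∀ F, Tendsto (fun m => x (insert m F)) atTop (𝓝 (x F)))
    {δ : ℝ} (hδ : 0 < δ) {N : ℕ}
    (hjump : ∀ F : Finset ℕ, F.card < N → ∀ m ∉ F, δ ≤ |(h - k) (x (insert m F)) - (h - k) (x F)|) :
    ∃ F : Finset ℕ, F.card = N ∧ (h + k) (x ∅) + N * (δ / 2) ≤ (h + k) (x F) := by
  induction N with
  | zero => exact ⟨∅, rfl, by simp⟩
  | succ N ih =>
    obtain ⟨F, rfl, hF⟩ := ih fun F' hF' => hjump F' (by omega)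
    have hfresh : ∀ᶠ m in atTop, m ∉ F :=
      Nat.cofinite_eq_atTop ▸ F.finite_toSet.eventually_cofinite_notMem
    obtain ⟨m, hm, hstep⟩ := (hfresh.and (eventually_add_le_of_abs_sub_ge (hh _) (hk _) (hx F) hδ
      (hfresh.mono fun m hm => hjump F (by omega) m hm))).exists
    refine ⟨insert m F, Finset.card_insert_of_notMem hm, ?_⟩
    push_cast
    linarith

end Semicontinuity

instance : Uncountable (ℕ → Bool) := by
  rw [← Cardinal.aleph0_lt_mk_iff, Cardinal.mk_arrow, Cardinal.mk_bool, Cardinal.mk_nat]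
  simpa using Cardinal.cantor Cardinal.aleph0

def atMostOnes (i : ℕ) : Set (ℕ → Bool) :=
  {c | ∀ s : Finset ℕ, (∀ j ∈ s, c j = true) → s.card ≤ i}

lemma isClosed_atMostOnes (i : ℕ) : IsClosed (atMostOnes i) := by
  simp only [atMostOnes, ofPred_forall]
  refine isClosed_iInter fun s => isClosed_imp ?_ isClosed_const
  simp only [ofPred_forall]
  exact isOpen_biInter_finset fun j _ =>
    (continuous_apply (A := fun _ => Bool) j).isOpen_preimage {true} (isOpen_discrete _)

lemma atMostOnes_mono : Monotone atMostOnes :=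
  fun _ _ hij _ hc s hs => (hc s hs).trans hij

lemma decide_mem_mem_atMostOnes_iff (F : Finset ℕ) (i : ℕ) :
    (fun j => decide (j ∈ F)) ∈ atMostOnes i ↔ F.card ≤ i :=
  ⟨fun h => h F fun _ hj => decide_eq_true hj,
    fun h _ hs => (Finset.card_le_card fun j hj => of_decide_eq_true (hs j hj)).trans h⟩

def cantorPoint (b : ℕ → Bool) (n : ℕ) (F : Finset ℕ) : ℕ → ℕ → Bool :=
  update (fun _ => b) n fun j => decide (j ∈ F)

lemma tendsto_cantorPoint_insert (b : ℕ → Bool) (n : ℕ) (F : Finset ℕ) :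
    Tendsto (fun m => cantorPoint b n (insert m F)) atTop (𝓝 (cantorPoint b n F)) := by
  refine ((continuous_update n).tendsto _).comp (tendsto_const_nhds.prodMk_nhds ?_)
  refine tendsto_pi_nhds.2 fun j => tendsto_atTop_of_eventually_const (i₀ := j + 1) fun m hm => ?_
  exact decide_eq_decide.2 (Finset.mem_insert.trans (or_iff_right (by omega)))

section CantorWitness

variable {K : Type*}

noncomputable def cantorLayer (e : (ℕ → ℕ → Bool) → K) (n : ℕ) : K → ℝ :=
  altIndicatorSum (fun i => e '' {y | y n ∈ atMostOnes i}) (4 ^ n)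

noncomputable def cantorWitness (e : (ℕ → ℕ → Bool) → K) (x : K) : ℝ :=
  ∑' n, cantorLayer e n x / 2 ^ n

lemma abs_cantorLayer_le_one (e : (ℕ → ℕ → Bool) → K) (n : ℕ) (x : K) :
    |cantorLayer e n x| ≤ 1 :=
  abs_altIndicatorSum_le_one (A := fun i => e '' {y | y n ∈ atMostOnes i})
    (fun _ _ hij => image_mono fun _ hy => atMostOnes_mono hij hy) _ x

lemma cantorWitness_apply {e : (ℕ → ℕ → Bool) → K} (he : Injective e) (y : ℕ → ℕ → Bool) :
    cantorWitness e (e y) = ∑' n, altIndicatorSum atMostOnes (4 ^ n) (y n) / 2 ^ n := by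
  simp only [cantorWitness, cantorLayer, altIndicatorSum_image he]
  rfl

lemma abs_cantorWitness_insert_sub {e : (ℕ → ℕ → Bool) → K} (he : Injective e)
    (b : ℕ → Bool) {n m : ℕ} {F : Finset ℕ} (hm : m ∉ F) (hF : F.card < 4 ^ n) :
    |cantorWitness e (e (cantorPoint b n (insert m F))) - cantorWitness e (e (cantorPoint b n F))|
      = 1 / 2 ^ n := by
  have hsum (y : ℕ → ℕ → Bool) := summable_div_two_pow fun p =>
    abs_altIndicatorSum_le_one atMostOnes_mono (4 ^ p) (y p)
  rw [cantorWitness_apply he, cantorWitness_apply he, ← (hsum _).tsum_sub (hsum _),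
    tsum_eq_single n fun p hp => by simp [cantorPoint, update_of_ne hp], ← sub_div, abs_div,
    abs_of_pos (by positivity : (0 : ℝ) < 2 ^ n)]
  congr 1
  refine abs_altIndicatorSum_sub_eq_one (c := F.card) (fun j => ?_) (fun j => ?_) (by omega)
  · simp only [cantorPoint, update_self, decide_mem_mem_atMostOnes_iff]
  · simp only [cantorPoint, update_self, decide_mem_mem_atMostOnes_iff,
      Finset.card_insert_of_notMem hm]

lemma bdd_cantorWitness (e : (ℕ → ℕ → Bool) → K) : Bdd (cantorWitness e) :=
  bdd_tsum_div_two_pow (abs_cantorLayer_le_one e)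

variable [TopologicalSpace K] {e : (ℕ → ℕ → Bool) → K}

lemma exists_dbsc_near_cantorWitness [T2Space K] (he : Continuous e) {ε : ℝ} (hε : 0 < ε) :
    ∃ g : K → ℝ, DBSC g ∧ ∀ x, |cantorWitness e x - g x| ≤ ε := by
  refine exists_dbsc_near_tsum_div_two_pow (fun n => dbsc_altIndicatorSum (fun i => ?_) _)
    (abs_cantorLayer_le_one e) hε
  exact ((isClosed_atMostOnes i).preimage (continuous_apply n)).isCompact.image he |>.isClosed

lemma not_countable_ne_cantorWitness (he : Continuous e) (hinj : Injective e) {g : K → ℝ}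
    (hg : DBSC g) : ¬ {x | cantorWitness e x ≠ g x}.Countable := by
  intro hcount
  obtain ⟨h, k, ⟨Ch, hCh⟩, ⟨Ck, hCk⟩, hh, hk, rfl⟩ := hg
  obtain ⟨n, hn⟩ := pow_unbounded_of_one_lt (4 * (Ch + Ck)) (one_lt_two : (1 : ℝ) < 2)
  let x (b : ℕ → Bool) (F : Finset ℕ) : K := e (cantorPoint b n F)
  obtain ⟨b, hb⟩ := hcount.exists_disjoint (P := fun b => range (x b)) fun b b' hbb' =>
    disjoint_range_iff.2 fun F F' hFF' => hbb' <| by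
      simpa [cantorPoint] using congrFun (hinj hFF') (n + 1)
  have hfg (F : Finset ℕ) : cantorWitness e (x b F) = (h - k) (x b F) :=
    not_not.1 (disjoint_left.1 hb (mem_range_self F))
  obtain ⟨F, -, hF⟩ := exists_card_eq_and_add_le hh hk (x := x b) (N := 4 ^ n)
    (fun F => (he.tendsto _).comp (tendsto_cantorPoint_insert b n F))
    (by positivity : (0 : ℝ) < 1 / 2 ^ n) fun F hF m hm => by
      rw [← hfg (insert m F), ← hfg F, abs_cantorWitness_insert_sub hinj b hm hF]
  have hgrowth : ((4 ^ n : ℕ) : ℝ) * (1 / 2 ^ n / 2) = 2 ^ n / 2 := by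
    rw [Nat.cast_pow, Nat.cast_ofNat, show (4 : ℝ) = 2 * 2 by norm_num, mul_pow]
    field_simp
  simp only [Pi.add_apply] at hF
  linarith [abs_le.1 (hCh (x b F)), abs_le.1 (hCk (x b F)), abs_le.1 (hCh (x b ∅)),
    abs_le.1 (hCk (x b ∅))]

end CantorWitness

/-- Let K be an uncountable Polish space. Then there exists f in the
uniform closure of DBSC(K) in B(K) such that for every g ∈ DBSC(K) the set [f ≠ g] is
uncountable; in particular no function in DBSC(K) agrees with f off a countable set. -/
theorem stmt13 {K : Type*} [TopologicalSpace K] [PolishSpace K] [Uncountable K] :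
    ∃ f : K → ℝ, Bdd f ∧
      (∀ ε : ℝ, 0 < ε → ∃ g : K → ℝ, DBSC g ∧ ∀ x, |f x - g x| ≤ ε) ∧
      (∀ g : K → ℝ, DBSC g → ¬ {x | f x ≠ g x}.Countable) := by
  obtain ⟨E, -, hE, hEinj⟩ := isClosed_univ.exists_nat_bool_injection_of_not_countable
    (not_countable_univ (α := K))
  let e := E ∘ cantorSpaceHomeomorphNatToCantorSpace.symm
  have he : Continuous e := hE.comp cantorSpaceHomeomorphNatToCantorSpace.symm.continuous
  have hinj : Injective e := hEinj.comp cantorSpaceHomeomorphNatToCantorSpace.symm.injective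
  exact ⟨cantorWitness e, bdd_cantorWitness e, fun ε hε => exists_dbsc_near_cantorWitness he hε,
    fun g hg => not_countable_ne_cantorWitness he hinj hg⟩
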